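/- For (a,b), (α,β) in the upper half plane, the quantity (1/2)·tr(A^{-1} B)·√(det A / det B)·√(det B), where A = T_{a,b}^T T_{a,b} and B = T_{α,β}^T T_{α,β} with T_{a,b} the linear map sending (1,0) ↦ (1/√b)(1,0) and (0,1) ↦ (1/√b)(a,b), equals 1 + ((a-α)² + (b-β)²)/(2bβ). -/

import Mathlib

/-!
Since `det T_{a,b} = 1`, both Gram matrices `A = TᵀT` have determinant `1`: the square-root
factors equal `1` and `A⁻¹` is the adjugate of `A`. What remains is the trace of a product of
explicit `2 × 2` matrices, `((a - α)² + b² + β²) / (bβ)`.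
-/

open Matrix

/-- The matrix of the linear map `T_{a,b} : ℝ² → ℝ²` sending `(1,0) ↦ (1/√b)(1,0)` and
`(0,1) ↦ (1/√b)(a,b)`. -/
noncomputable def Tmat (a b : ℝ) : Matrix (Fin 2) (Fin 2) ℝ :=
  (1 / Real.sqrt b) • !![1, a; 0, b]

section

variable {a b : ℝ}

theorem det_Tmat (hb : 0 < b) : (Tmat a b).det = 1 := by
  rw [Tmat, det_smul, det_fin_two_of, Fintype.card_fin, div_pow, Real.sq_sqrt hb.le]
  field_simp
  ring

theorem det_gram_Tmat (hb : 0 < b) : ((Tmat a b)ᵀ * Tmat a b).det = 1 := by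
  rw [det_mul, det_transpose, det_Tmat hb, one_mul]

theorem gram_Tmat (hb : 0 < b) :
    (Tmat a b)ᵀ * Tmat a b = b⁻¹ • !![1, a; a, a ^ 2 + b ^ 2] := by
  rw [Tmat, transpose_smul, smul_mul_smul_comm, one_div_mul_one_div, Real.mul_self_sqrt hb.le,
    one_div]
  congr 1
  ext i j
  fin_cases i <;> fin_cases j <;> simp [mul_apply]; ring

theorem inv_gram_Tmat (hb : 0 < b) :
    ((Tmat a b)ᵀ * Tmat a b)⁻¹ = b⁻¹ • !![a ^ 2 + b ^ 2, -a; -a, 1] := by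
  rw [inv_def, det_gram_Tmat hb, gram_Tmat hb, adjugate_smul, adjugate_fin_two_of]
  simp

theorem trace_inv_gram_Tmat_mul_gram_Tmat {α β : ℝ} (hb : 0 < b) (hβ : 0 < β) :
    (((Tmat a b)ᵀ * Tmat a b)⁻¹ * ((Tmat α β)ᵀ * Tmat α β)).trace =
      ((a - α) ^ 2 + b ^ 2 + β ^ 2) / (b * β) := by
  rw [inv_gram_Tmat hb, gram_Tmat hβ, smul_mul_smul_comm, trace_smul, mul_fin_two,
    trace_fin_two_of, smul_eq_mul]
  field_simp
  ring

end

/-- With `A = T_{a,b}ᵀ T_{a,b}` and `B = T_{α,β}ᵀ T_{α,β}`, the Dirichlet energy of the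
identity map between the corresponding flat unit-area tori,
`(1/2)·tr(A⁻¹B)·√(det A/det B)·√(det B)`, equals `1 + ((a-α)² + (b-β)²)/(2bβ)`. -/
theorem energy_identity_formula (a b α β : ℝ) (hb : 0 < b) (hβ : 0 < β) :
    (1 / 2) * (((Tmat a b)ᵀ * Tmat a b)⁻¹ * ((Tmat α β)ᵀ * Tmat α β)).trace *
        Real.sqrt (((Tmat a b)ᵀ * Tmat a b).det / ((Tmat α β)ᵀ * Tmat α β).det) *
        Real.sqrt ((Tmat α β)ᵀ * Tmat α β).det =
      1 + ((a - α) ^ 2 + (b - β) ^ 2) / (2 * b * β) := by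
  rw [trace_inv_gram_Tmat_mul_gram_Tmat hb hβ, det_gram_Tmat hb, det_gram_Tmat hβ, div_one,
    Real.sqrt_one]
  field_simp
  ring
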